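/- arXiv:2501.16589 — 3 statements merged into one kernel-verified Lean document; each statement's English description precedes it below -/
import Mathlib

section
/- (Wendel's inequality) For every x > 0 and every a with 0 < a < 1, ( x / (x + a) )^{1 - a} ≤ Γ(x + a) / ( x^a · Γ(x) ) ≤ 1, where Γ is the real Gamma function. -/
open MeasureTheory Filter Topology Real

lemma gamma_interp (x y a : ℝ) (hx : 0 < x) (hy : 0 < y) (ha0 : 0 ≤ a) (ha1 : a ≤ 1) :
    Real.Gamma ((1 - a) * x + a * y) ≤ Real.Gamma x ^ (1 - a) * Real.Gamma y ^ a := by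
  have h := Real.convexOn_log_Gamma.2 (Set.mem_Ioi.mpr hx) (Set.mem_Ioi.mpr hy)
    (by linarith : (0:ℝ) ≤ 1 - a) ha0 (by ring)
  simp only [Function.comp, smul_eq_mul] at h
  have hgx := Real.Gamma_pos_of_pos hx
  have hgy := Real.Gamma_pos_of_pos hy
  have hpt : 0 < (1 - a) * x + a * y := by
    rcases eq_or_lt_of_le ha1 with h1 | h1
    · subst h1; simpa using hy
    · nlinarith
  have hgpt := Real.Gamma_pos_of_pos hpt
  calc Real.Gamma ((1 - a) * x + a * y)
      = Real.exp (Real.log (Real.Gamma ((1 - a) * x + a * y))) := (Real.exp_log hgpt).symm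
    _ ≤ Real.exp ((1 - a) * Real.log (Real.Gamma x) + a * Real.log (Real.Gamma y)) :=
        Real.exp_le_exp.mpr h
    _ = Real.Gamma x ^ (1 - a) * Real.Gamma y ^ a := by
        rw [Real.exp_add, Real.rpow_def_of_pos hgx, Real.rpow_def_of_pos hgy,
          mul_comm (Real.log (Real.Gamma x)), mul_comm (Real.log (Real.Gamma y))]

/-- **Wendel's inequality.** For every `x > 0` and `0 < a < 1`,
`(x/(x+a))^(1-a) ≤ Γ(x+a)/(x^a Γ(x)) ≤ 1`. -/
theorem stmt12 (x a : ℝ) (hx : 0 < x) (ha0 : 0 < a) (ha1 : a < 1) :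
    (x / (x + a)) ^ (1 - a) ≤ Real.Gamma (x + a) / (x ^ a * Real.Gamma x) ∧
      Real.Gamma (x + a) / (x ^ a * Real.Gamma x) ≤ 1 := by
  have hgx := Real.Gamma_pos_of_pos hx
  have hxa : 0 < x + a := by linarith
  have hgxa := Real.Gamma_pos_of_pos hxa
  have hxapow : (0:ℝ) < x ^ a := Real.rpow_pos_of_pos hx a
  constructor
  · -- lower bound: x * Γ x ≤ (x+a)^(1-a) * Γ(x+a)
    have key := gamma_interp (x + a) (x + 1 + a) (1 - a) hxa (by linarith)
      (by linarith) (by linarith)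
    have heq : (1 - (1 - a)) * (x + a) + (1 - a) * (x + 1 + a) = x + 1 := by ring
    rw [heq] at key
    have heq2 : x + 1 + a = (x + a) + 1 := by ring
    rw [heq2, Real.Gamma_add_one hxa.ne', Real.Gamma_add_one hx.ne'] at key
    -- key : x * Γ x ≤ Γ(x+a)^(1-(1-a)) * ((x+a) * Γ(x+a))^(1-a)
    have key2 : x * Real.Gamma x ≤ (x + a) ^ (1 - a) * Real.Gamma (x + a) := by
      calc x * Real.Gamma x ≤ Real.Gamma (x + a) ^ (1 - (1 - a)) *
            ((x + a) * Real.Gamma (x + a)) ^ (1 - a) := key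
        _ = (x + a) ^ (1 - a) * Real.Gamma (x + a) := by
            rw [Real.mul_rpow hxa.le hgxa.le, mul_comm ((x+a) ^ (1-a)), ← mul_assoc,
              ← Real.rpow_add hgxa]
            norm_num [mul_comm]
    rw [Real.div_rpow hx.le hxa.le, div_le_div_iff₀ (by positivity) (by positivity)]
    calc x ^ (1 - a) * (x ^ a * Real.Gamma x)
        = (x + a) ^ (1 - a) / (x + a) ^ (1 - a) * (x ^ (1-a) * x ^ a) * (x * Real.Gamma x) / x := by
          rw [div_self (by positivity : ((x+a):ℝ) ^ (1-a) ≠ 0)]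
          field_simp
      _ = x ^ (1 - a) * x ^ a / x / (x + a) ^ (1 - a) * ((x + a) ^ (1 - a) * (x * Real.Gamma x)) := by
          ring
      _ ≤ x ^ (1 - a) * x ^ a / x / (x + a) ^ (1 - a) *
            ((x + a) ^ (1 - a) * ((x + a) ^ (1 - a) * Real.Gamma (x + a))) := by
          gcongr
      _ = Real.Gamma (x + a) * (x + a) ^ (1 - a) := by
          rw [← Real.rpow_add hx]
          norm_num
          field_simp
  · -- upper bound: Γ(x+a) ≤ x^a * Γ x
    have key := gamma_interp x (x + 1) a hx (by linarith) ha0.le ha1.le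
    have heq : (1 - a) * x + a * (x + 1) = x + a := by ring
    rw [heq, Real.Gamma_add_one hx.ne'] at key
    rw [div_le_one (by positivity)]
    calc Real.Gamma (x + a) ≤ Real.Gamma x ^ (1 - a) * (x * Real.Gamma x) ^ a := key
      _ = x ^ a * Real.Gamma x := by
          rw [Real.mul_rpow hx.le hgx.le, ← mul_assoc, mul_comm (Real.Gamma x ^ (1-a)),
            mul_assoc, ← Real.rpow_add hgx]
          norm_num
end

section
/- Let 1 ≤ p < 2 and 1 ≤ r ≤ p. Suppose the sequence (X_k) is mean dominated by Y and E|Y|^p < ∞. Then Σ_{n=1}^∞ n^{p/r - 2 - 2/r} · Σ_{k=1}^n E[ X_k² · 1(|X_k| ≤ n^{1/r}) ] < ∞. -/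
open MeasureTheory Filter Topology Real
open scoped ENNReal NNReal

private lemma rpow_mvt {t : ℝ} {x : ℝ} (hx : 1 ≤ x) :
    ∃ c, x < c ∧ c < x + 1 ∧ (x + 1) ^ t - x ^ t = t * c ^ (t - 1) := by
  have hlt : x < x + 1 := by linarith
  obtain ⟨c, hc, hceq⟩ := exists_hasDerivAt_eq_slope (fun y => y ^ t)
    (fun y => t * y ^ (t - 1)) hlt
    (fun y hy => (Real.continuousAt_rpow_const y t
      (Or.inl (by rintro rfl; exact absurd hy.1 (by norm_num; linarith)))).continuousWithinAt)
    (fun y hy => Real.hasDerivAt_rpow_const (Or.inl (by rintro rfl; linarith [hy.1])))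
  refine ⟨c, hc.1, hc.2, ?_⟩
  rw [hceq]; ring

private lemma rpow_succ_sub_le {u : ℝ} (hu : 1 ≤ u) {x : ℝ} (hx : 1 ≤ x) :
    (x + 1) ^ u - x ^ u ≤ u * (x + 1) ^ (u - 1) := by
  obtain ⟨c, hc1, hc2, heq⟩ := rpow_mvt (t := u) hx
  rw [heq]
  have : c ^ (u - 1) ≤ (x + 1) ^ (u - 1) :=
    Real.rpow_le_rpow (by linarith) hc2.le (by linarith)
  exact mul_le_mul_of_nonneg_left this (by linarith)

private lemma rpow_succ_sub_ge {t : ℝ} (ht : t ≤ 0) {x : ℝ} (hx : 1 ≤ x) :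
    (-t) * (x + 1) ^ (t - 1) ≤ x ^ t - (x + 1) ^ t := by
  obtain ⟨c, hc1, hc2, heq⟩ := rpow_mvt (t := t) hx
  have h1 : x ^ t - (x + 1) ^ t = (-t) * c ^ (t - 1) := by rw [← neg_sub, heq]; ring
  rw [h1]
  have : (x + 1) ^ (t - 1) ≤ c ^ (t - 1) :=
    Real.rpow_le_rpow_of_nonpos (by linarith) hc2.le (by linarith)
  exact mul_le_mul_of_nonneg_left this (by linarith)

private lemma telescope_Ico {t : ℝ} (j : ℕ) : ∀ N : ℕ, j + 1 ≤ N →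
    ∑ n ∈ Finset.Ico (j + 1) N, ((n : ℝ) ^ t - ((n : ℝ) + 1) ^ t)
      = ((j + 1 : ℕ) : ℝ) ^ t - (N : ℝ) ^ t := by
  intro N
  induction N with
  | zero => omega
  | succ N ih =>
    intro hN
    rcases eq_or_lt_of_le hN with h | h
    · rw [← h]; simp
    · have hN' : j + 1 ≤ N := by omega
      rw [Finset.sum_Ico_succ_top hN', ih hN']
      push_cast
      ring

private lemma tail_tsum_le {t : ℝ} (ht : t < 0) (j : ℕ) :
    ∑' n : ℕ, (if j < n then ENNReal.ofReal (((n + 1 : ℕ) : ℝ) ^ (t - 1)) else 0)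
      ≤ ENNReal.ofReal (((j + 1 : ℕ) : ℝ) ^ t / (-t)) := by
  have htpos : 0 < -t := by linarith
  rw [ENNReal.tsum_eq_iSup_sum]
  refine iSup_le fun F => ?_
  obtain ⟨N, hN⟩ := F.exists_nat_subset_range
  refine le_trans (Finset.sum_le_sum_of_subset hN) ?_
  have hfilter : (Finset.range N).filter (fun n => j < n) = Finset.Ico (j + 1) N := by
    ext n; simp [Finset.mem_filter, Finset.mem_range, Finset.mem_Ico]; omega
  rw [← Finset.sum_filter, hfilter]
  have hnonneg : ∀ n ∈ Finset.Ico (j + 1) N,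
      (0:ℝ) ≤ ((n : ℝ) ^ t - ((n : ℝ) + 1) ^ t) / (-t) := by
    intro n hn
    rw [Finset.mem_Ico] at hn
    have hn1 : (1 : ℝ) ≤ (n : ℝ) := by
      exact_mod_cast Nat.one_le_iff_ne_zero.mpr (by omega)
    have h1 := rpow_succ_sub_ge ht.le hn1
    have h2 : 0 ≤ (-t) * ((n:ℝ) + 1) ^ (t - 1) := by positivity
    have h3 : (0:ℝ) ≤ (n : ℝ) ^ t - ((n:ℝ) + 1) ^ t := by linarith
    positivity
  have hterm : ∀ n ∈ Finset.Ico (j + 1) N,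
      ENNReal.ofReal (((n + 1 : ℕ) : ℝ) ^ (t - 1))
        ≤ ENNReal.ofReal (((n : ℝ) ^ t - ((n : ℝ) + 1) ^ t) / (-t)) := by
    intro n hn
    rw [Finset.mem_Ico] at hn
    have hn1 : (1 : ℝ) ≤ (n : ℝ) := by
      exact_mod_cast Nat.one_le_iff_ne_zero.mpr (by omega)
    have h1 := rpow_succ_sub_ge ht.le hn1
    apply ENNReal.ofReal_le_ofReal
    rw [le_div_iff₀ htpos]
    push_cast
    nlinarith [h1]
  refine le_trans (Finset.sum_le_sum hterm) ?_
  rw [← ENNReal.ofReal_sum_of_nonneg hnonneg]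
  apply ENNReal.ofReal_le_ofReal
  rw [← Finset.sum_div]
  rcases le_or_gt N (j + 1) with h | h
  · rw [Finset.Ico_eq_empty (by omega)]
    simp only [Finset.sum_empty, zero_div]
    positivity
  · rw [telescope_Ico j N h.le]
    have hN0 : (0:ℝ) ≤ (N:ℝ) ^ t := Real.rpow_nonneg (by positivity) t
    gcongr
    linarith

private lemma layer_bound {r : ℝ} (hr : 1 ≤ r) {z : ℝ} (hz : 0 ≤ z) : ∀ n : ℕ,
    z ≤ ((n + 1 : ℕ) : ℝ) ^ (1 / r) →
    z ^ 2 ≤ 1 + ∑ j ∈ Finset.range n,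
      (if ((j + 1 : ℕ) : ℝ) ^ (1 / r) < z then
        ((j + 2 : ℕ) : ℝ) ^ (2 / r) - ((j + 1 : ℕ) : ℝ) ^ (2 / r) else 0) := by
  have hr0 : 0 < r := by linarith
  have key : ∀ m : ℕ, z ≤ ((m + 1 : ℕ) : ℝ) ^ (1 / r) → z ^ 2 ≤ ((m + 1 : ℕ) : ℝ) ^ (2 / r) := by
    intro m hm
    have h1 : z ^ 2 ≤ (((m + 1 : ℕ) : ℝ) ^ (1 / r)) ^ 2 := by
      apply pow_le_pow_left₀ hz hm 2
    refine h1.trans_eq ?_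
    rw [← Real.rpow_natCast (((m + 1 : ℕ) : ℝ) ^ (1 / r)) 2, ← Real.rpow_mul (by positivity)]
    congr 1
    push_cast
    ring
  have hmono : ∀ a b : ℕ, a ≤ b → ((a : ℝ)) ^ (1 / r) ≤ ((b : ℝ)) ^ (1 / r) := by
    intro a b hab
    exact Real.rpow_le_rpow (by positivity) (by exact_mod_cast hab) (by positivity)
  have hterm_nonneg : ∀ j : ℕ,
      (0:ℝ) ≤ (if ((j + 1 : ℕ) : ℝ) ^ (1 / r) < z then
        ((j + 2 : ℕ) : ℝ) ^ (2 / r) - ((j + 1 : ℕ) : ℝ) ^ (2 / r) else 0) := by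
    intro j
    split
    · have : ((j + 1 : ℕ) : ℝ) ^ (2 / r) ≤ ((j + 2 : ℕ) : ℝ) ^ (2 / r) :=
        Real.rpow_le_rpow (by positivity) (by push_cast; linarith) (by positivity)
      linarith
    · exact le_refl _
  intro n
  induction n with
  | zero =>
    intro h0
    simp only [Finset.range_zero, Finset.sum_empty, add_zero]
    have := key 0 h0
    simpa using this
  | succ n ih =>
    intro hn
    rcases le_or_gt z (((n + 1 : ℕ) : ℝ) ^ (1 / r)) with h | h
    · refine (ih h).trans ?_
      rw [Finset.sum_range_succ]
      have := hterm_nonneg n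
      linarith
    · -- all indicators in range (n+1) fire
      have hall : ∀ j ∈ Finset.range (n + 1),
          (if ((j + 1 : ℕ) : ℝ) ^ (1 / r) < z then
            ((j + 2 : ℕ) : ℝ) ^ (2 / r) - ((j + 1 : ℕ) : ℝ) ^ (2 / r) else 0)
          = ((j + 2 : ℕ) : ℝ) ^ (2 / r) - ((j + 1 : ℕ) : ℝ) ^ (2 / r) := by
        intro j hj
        rw [Finset.mem_range] at hj
        rw [if_pos ((hmono (j+1) (n+1) (by omega)).trans_lt h)]
      rw [Finset.sum_congr rfl hall]
      have htel : ∑ j ∈ Finset.range (n + 1),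
          (((j + 2 : ℕ) : ℝ) ^ (2 / r) - ((j + 1 : ℕ) : ℝ) ^ (2 / r))
          = ((n + 2 : ℕ) : ℝ) ^ (2 / r) - ((1 : ℕ) : ℝ) ^ (2 / r) := by
        exact Finset.sum_range_sub (f := fun j => ((j + 1 : ℕ) : ℝ) ^ (2 / r)) (n + 1)
      rw [htel]
      have h2 := key (n + 1) hn
      simp only [Nat.cast_one, Real.one_rpow]
      have : ((n + 1 + 1 : ℕ) : ℝ) = ((n + 2 : ℕ) : ℝ) := by push_cast; ring
      rw [this] at h2
      linarith

private lemma moment_tsum_le {Ω : Type*} [MeasurableSpace Ω] (P : Measure Ω)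
    [IsProbabilityMeasure P] {Z : Ω → ℝ} (hZ : Measurable Z) (hZ0 : ∀ ω, 0 ≤ Z ω)
    {q : ℝ} (hq : 1 ≤ q) :
    ∑' j : ℕ, ENNReal.ofReal (((j + 1 : ℕ) : ℝ) ^ (q - 1)) * P {ω | ((j + 1 : ℕ) : ℝ) < Z ω}
      ≤ ∫⁻ ω, ENNReal.ofReal (Z ω ^ q) ∂P := by
  have hmeas : ∀ j : ℕ, MeasurableSet {ω | ((j + 1 : ℕ) : ℝ) < Z ω} :=
    fun j => measurableSet_lt measurable_const hZ
  have hify : ∀ j : ℕ, ENNReal.ofReal (((j + 1 : ℕ) : ℝ) ^ (q - 1))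
        * P {ω | ((j + 1 : ℕ) : ℝ) < Z ω}
      = ∫⁻ ω, Set.indicator {ω | ((j + 1 : ℕ) : ℝ) < Z ω}
          (fun _ => ENNReal.ofReal (((j + 1 : ℕ) : ℝ) ^ (q - 1))) ω ∂P := by
    intro j
    rw [lintegral_indicator_const (hmeas j)]
  rw [tsum_congr hify, ← lintegral_tsum (fun j =>
    ((measurable_const.indicator (hmeas j)).aemeasurable))]
  apply lintegral_mono
  intro ω
  set z := Z ω with hzdef
  have hz : 0 ≤ z := hZ0 ω
  have hbd : ∀ j : ℕ, Set.indicator {ω | ((j + 1 : ℕ) : ℝ) < Z ω}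
        (fun _ => ENNReal.ofReal (((j + 1 : ℕ) : ℝ) ^ (q - 1))) ω
      ≤ (if ((j + 1 : ℕ) : ℝ) < z then ENNReal.ofReal (z ^ (q - 1)) else 0) := by
    intro j
    rw [Set.indicator_apply]
    split_ifs with h h2 h2
    · exact ENNReal.ofReal_le_ofReal (Real.rpow_le_rpow (by positivity) h2.le (by linarith))
    · exact absurd h h2
    · exact zero_le
    · exact le_refl _
  refine le_trans (ENNReal.tsum_le_tsum hbd) ?_
  have hsupp : ∀ j : ℕ, j ∉ Finset.range ⌊z⌋₊ →
      (if ((j + 1 : ℕ) : ℝ) < z then ENNReal.ofReal (z ^ (q - 1)) else 0) = 0 := by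
    intro j hj
    rw [Finset.mem_range, not_lt] at hj
    rw [if_neg]
    push_cast
    have h1 : z < (⌊z⌋₊ : ℝ) + 1 := Nat.lt_floor_add_one z
    have h2 : ((⌊z⌋₊ : ℕ) : ℝ) ≤ (j : ℝ) := by exact_mod_cast hj
    linarith
  rw [tsum_eq_sum hsupp]
  have : ∑ j ∈ Finset.range ⌊z⌋₊,
      (if ((j + 1 : ℕ) : ℝ) < z then ENNReal.ofReal (z ^ (q - 1)) else 0)
      ≤ ∑ _j ∈ Finset.range ⌊z⌋₊, ENNReal.ofReal (z ^ (q - 1)) := by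
    apply Finset.sum_le_sum
    intro j _
    split_ifs
    · exact le_refl _
    · exact zero_le
  refine this.trans ?_
  rw [Finset.sum_const, Finset.card_range, nsmul_eq_mul]
  have h1 : (⌊z⌋₊ : ℝ≥0∞) ≤ ENNReal.ofReal z := by
    rw [← ENNReal.ofReal_natCast]
    exact ENNReal.ofReal_le_ofReal (Nat.floor_le hz)
  refine le_trans (mul_le_mul_left h1 _) ?_
  rw [← ENNReal.ofReal_mul hz]
  apply ENNReal.ofReal_le_ofReal
  have h2 : z ^ q = z * z ^ (q - 1) := by
    have : q = 1 + (q - 1) := by ring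
    rw [this, Real.rpow_add_of_nonneg hz zero_le_one (by linarith), Real.rpow_one]
    ring_nf
  rw [← h2]

/-- **Truncated second-moment series.** For `1 ≤ p < 2`, `1 ≤ r ≤ p`, if `(X k)` is mean
dominated by `Y` with `E|Y|^p < ∞`, then
`∑ₙ n^(p/r-2-2/r) ∑_{k=1}^n E[Xₖ² 1(|Xₖ| ≤ n^(1/r))] < ∞`. -/
theorem stmt16
    {Ω : Type*} [MeasurableSpace Ω] (P : Measure Ω) [IsProbabilityMeasure P]
    (X : ℕ → Ω → ℝ) (Y : Ω → ℝ)
    (hX : ∀ k, Measurable (X k)) (hY : Measurable Y)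
    (p r : ℝ) (hp1 : 1 ≤ p) (hp2 : p < 2) (hr1 : 1 ≤ r) (hrp : r ≤ p)
    (M : ℝ) (hM : 0 < M)
    (hMD : ∀ x : ℝ, 0 < x → ∀ n : ℕ, 1 ≤ n →
      ∑ k ∈ Finset.range n, (P {ω | x < |X k ω|}).toReal
        ≤ M * n * (P {ω | x < |Y ω|}).toReal)
    (hmom : Integrable (fun ω => |Y ω| ^ p) P) :
    Summable (fun n : ℕ => ((n + 1 : ℕ) : ℝ) ^ (p / r - 2 - 2 / r) *
      ∑ k ∈ Finset.range (n + 1),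
        ∫ ω in {ω | |X k ω| ≤ ((n + 1 : ℕ) : ℝ) ^ (1 / r)}, (X k ω) ^ 2 ∂P) := by
  have hr0 : 0 < r := by linarith
  set β : ℝ := p / r - 2 - 2 / r with hβ
  set t : ℝ := (p - 2) / r with ht_def
  have htβ : β + 1 = t - 1 := by rw [hβ, ht_def]; ring
  have ht_neg : t < 0 := div_neg_of_neg_of_pos (by linarith) hr0
  set u : ℝ := 2 / r with hu_def
  have hu1 : 1 ≤ u := (one_le_div hr0).mpr (by linarith)
  set q : ℝ := p / r with hq_def
  have hq1 : 1 ≤ q := (one_le_div hr0).mpr hrp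
  have hqut : q - 1 = (u - 1) + t := by rw [hq_def, hu_def, ht_def]; ring
  set a : ℕ → ℝ := fun n => ((n + 1 : ℕ) : ℝ) ^ β *
      ∑ k ∈ Finset.range (n + 1),
        ∫ ω in {ω | |X k ω| ≤ ((n + 1 : ℕ) : ℝ) ^ (1 / r)}, (X k ω) ^ 2 ∂P with ha_def
  have ha_nonneg : ∀ n, 0 ≤ a n := by
    intro n
    apply mul_nonneg (Real.rpow_nonneg (by positivity) _)
    exact Finset.sum_nonneg fun k _ => integral_nonneg fun ω => sq_nonneg _
  set d : ℕ → ℝ := fun j => ((j + 2 : ℕ) : ℝ) ^ u - ((j + 1 : ℕ) : ℝ) ^ u with hd_def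
  have hd_nonneg : ∀ j, 0 ≤ d j := by
    intro j
    have : ((j + 1 : ℕ) : ℝ) ^ u ≤ ((j + 2 : ℕ) : ℝ) ^ u :=
      Real.rpow_le_rpow (by positivity) (by push_cast; linarith) (by positivity)
    show (0:ℝ) ≤ ((j + 2 : ℕ) : ℝ) ^ u - ((j + 1 : ℕ) : ℝ) ^ u
    linarith
  set Tail : ℕ → ℝ≥0∞ := fun j => P {ω | ((j + 1 : ℕ) : ℝ) ^ (1 / r) < |Y ω|} with hTail_def
  set G : ℕ → ℝ≥0∞ := fun j => ENNReal.ofReal (d j) * Tail j with hG_def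
  set E : ℕ → ℝ≥0∞ := fun n => ENNReal.ofReal (((n + 1 : ℕ) : ℝ) ^ (t - 1)) with hE_def
  -- Step II : per-n bound
  have step2 : ∀ n : ℕ, ENNReal.ofReal (a n)
      ≤ E n + ENNReal.ofReal M * (E n * ∑ j ∈ Finset.range n, G j) := by
    intro n
    have hSmeas : ∀ k : ℕ, MeasurableSet {ω | |X k ω| ≤ ((n + 1 : ℕ) : ℝ) ^ (1 / r)} :=
      fun k => measurableSet_le (hX k).abs measurable_const
    have hBmeas : ∀ j k : ℕ, MeasurableSet {ω | ((j + 1 : ℕ) : ℝ) ^ (1 / r) < |X k ω|} :=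
      fun j k => measurableSet_lt measurable_const (hX k).abs
    -- per-k bound
    have hk : ∀ k : ℕ,
        ENNReal.ofReal (∫ ω in {ω | |X k ω| ≤ ((n + 1 : ℕ) : ℝ) ^ (1 / r)}, (X k ω) ^ 2 ∂P)
        ≤ 1 + ∑ j ∈ Finset.range n,
            ENNReal.ofReal (d j) * P {ω | ((j + 1 : ℕ) : ℝ) ^ (1 / r) < |X k ω|} := by
      intro k
      have hInt : Integrable (fun ω => (X k ω) ^ 2)
          (P.restrict {ω | |X k ω| ≤ ((n + 1 : ℕ) : ℝ) ^ (1 / r)}) := by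
        refine Integrable.mono' (integrable_const ((((n + 1 : ℕ) : ℝ) ^ (1 / r)) ^ 2))
          ((hX k).pow_const 2).aestronglyMeasurable ?_
        refine (ae_restrict_iff' (hSmeas k)).mpr (ae_of_all _ fun ω hω => ?_)
        have hω' : |X k ω| ≤ ((n + 1 : ℕ) : ℝ) ^ (1 / r) := hω
        calc ‖(X k ω) ^ 2‖ = |X k ω| ^ 2 := by rw [Real.norm_eq_abs, abs_pow, sq_abs]
          _ ≤ (((n + 1 : ℕ) : ℝ) ^ (1 / r)) ^ 2 := by
              exact pow_le_pow_left₀ (abs_nonneg _) hω' 2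
      rw [ofReal_integral_eq_lintegral_ofReal hInt (ae_of_all _ fun ω => sq_nonneg _)]
      have hgmeas : Measurable (fun ω => (1:ℝ≥0∞) + ∑ j ∈ Finset.range n,
          Set.indicator {ω | ((j + 1 : ℕ) : ℝ) ^ (1 / r) < |X k ω|}
            (fun _ => ENNReal.ofReal (d j)) ω) := by
        apply Measurable.const_add
        exact Finset.measurable_sum _ fun j _ => measurable_const.indicator (hBmeas j k)
      have hpt : ∀ ω ∈ {ω | |X k ω| ≤ ((n + 1 : ℕ) : ℝ) ^ (1 / r)},
          ENNReal.ofReal ((X k ω) ^ 2) ≤ (1:ℝ≥0∞) + ∑ j ∈ Finset.range n,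
            Set.indicator {ω | ((j + 1 : ℕ) : ℝ) ^ (1 / r) < |X k ω|}
              (fun _ => ENNReal.ofReal (d j)) ω := by
        intro ω hω
        have hlb := layer_bound hr1 (abs_nonneg (X k ω)) n hω
        rw [sq_abs] at hlb
        refine le_trans (ENNReal.ofReal_le_ofReal hlb) ?_
        refine le_trans ENNReal.ofReal_add_le ?_
        rw [ENNReal.ofReal_one]
        refine add_le_add le_rfl ?_
        refine le_trans (le_of_eq (ENNReal.ofReal_sum_of_nonneg fun j _ => ?_)) ?_
        · split_ifs with h
          · exact hd_nonneg j
          · exact le_refl 0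
        · refine Finset.sum_le_sum fun j _ => ?_
          rw [Set.indicator_apply]
          split_ifs with h1 h2 h2
          · exact le_refl _
          · exact absurd h1 h2
          · exact absurd h2 h1
          · simp
      calc ∫⁻ ω in {ω | |X k ω| ≤ ((n + 1 : ℕ) : ℝ) ^ (1 / r)},
            ENNReal.ofReal ((X k ω) ^ 2) ∂P
          ≤ ∫⁻ ω in {ω | |X k ω| ≤ ((n + 1 : ℕ) : ℝ) ^ (1 / r)},
              ((1:ℝ≥0∞) + ∑ j ∈ Finset.range n,
                Set.indicator {ω | ((j + 1 : ℕ) : ℝ) ^ (1 / r) < |X k ω|}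
                  (fun _ => ENNReal.ofReal (d j)) ω) ∂P := setLIntegral_mono hgmeas hpt
        _ ≤ ∫⁻ ω, ((1:ℝ≥0∞) + ∑ j ∈ Finset.range n,
                Set.indicator {ω | ((j + 1 : ℕ) : ℝ) ^ (1 / r) < |X k ω|}
                  (fun _ => ENNReal.ofReal (d j)) ω) ∂P := setLIntegral_le_lintegral _ _
        _ = 1 + ∑ j ∈ Finset.range n,
              ENNReal.ofReal (d j) * P {ω | ((j + 1 : ℕ) : ℝ) ^ (1 / r) < |X k ω|} := by
            rw [lintegral_add_left measurable_const, lintegral_const, measure_univ, mul_one,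
              lintegral_finset_sum _ (fun j _ => measurable_const.indicator (hBmeas j k))]
            congr 1
            refine Finset.sum_congr rfl fun j _ => ?_
            rw [lintegral_indicator_const (hBmeas j k)]
    -- sum over k and apply mean domination
    have hsum_k : ∑ k ∈ Finset.range (n + 1),
        ENNReal.ofReal (∫ ω in {ω | |X k ω| ≤ ((n + 1 : ℕ) : ℝ) ^ (1 / r)}, (X k ω) ^ 2 ∂P)
        ≤ ((n + 1 : ℕ) : ℝ≥0∞)
          + ENNReal.ofReal (M * ((n + 1 : ℕ) : ℝ)) * ∑ j ∈ Finset.range n, G j := by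
      refine le_trans (Finset.sum_le_sum fun k _ => hk k) ?_
      rw [Finset.sum_add_distrib, Finset.sum_const, Finset.card_range, Finset.sum_comm]
      refine add_le_add (by simp) ?_
      have hMD' : ∀ j ∈ Finset.range n, ∑ k ∈ Finset.range (n + 1),
          ENNReal.ofReal (d j) * P {ω | ((j + 1 : ℕ) : ℝ) ^ (1 / r) < |X k ω|}
          ≤ ENNReal.ofReal (M * ((n + 1 : ℕ) : ℝ)) * G j := by
        intro j _
        rw [← Finset.mul_sum]
        have h0 : ∀ k : ℕ, P {ω | ((j + 1 : ℕ) : ℝ) ^ (1 / r) < |X k ω|} ≠ ⊤ :=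
          fun k => measure_ne_top P _
        have hP : ∑ k ∈ Finset.range (n + 1), P {ω | ((j + 1 : ℕ) : ℝ) ^ (1 / r) < |X k ω|}
            ≤ ENNReal.ofReal (M * ((n + 1 : ℕ) : ℝ)) * Tail j := by
          have heq : ∑ k ∈ Finset.range (n + 1), P {ω | ((j + 1 : ℕ) : ℝ) ^ (1 / r) < |X k ω|}
              = ENNReal.ofReal (∑ k ∈ Finset.range (n + 1),
                  (P {ω | ((j + 1 : ℕ) : ℝ) ^ (1 / r) < |X k ω|}).toReal) := by
            rw [ENNReal.ofReal_sum_of_nonneg (fun k _ => ENNReal.toReal_nonneg)]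
            exact Finset.sum_congr rfl fun k _ => (ENNReal.ofReal_toReal (h0 k)).symm
          rw [heq]
          have hmd := hMD (((j + 1 : ℕ) : ℝ) ^ (1 / r)) (by positivity) (n + 1) (by omega)
          refine le_trans (ENNReal.ofReal_le_ofReal hmd) ?_
          rw [ENNReal.ofReal_mul (by positivity), ENNReal.ofReal_toReal (measure_ne_top P _)]
        calc ENNReal.ofReal (d j)
              * ∑ k ∈ Finset.range (n + 1), P {ω | ((j + 1 : ℕ) : ℝ) ^ (1 / r) < |X k ω|}
            ≤ ENNReal.ofReal (d j) * (ENNReal.ofReal (M * ((n + 1 : ℕ) : ℝ)) * Tail j) :=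
              mul_le_mul_right hP _
          _ = ENNReal.ofReal (M * ((n + 1 : ℕ) : ℝ)) * G j := by rw [hG_def]; ring
      exact le_trans (Finset.sum_le_sum hMD') (le_of_eq (Finset.mul_sum _ _ _).symm)
    -- assemble
    have hsplit : ENNReal.ofReal (a n) = ENNReal.ofReal (((n + 1 : ℕ) : ℝ) ^ β) *
        ∑ k ∈ Finset.range (n + 1),
          ENNReal.ofReal (∫ ω in {ω | |X k ω| ≤ ((n + 1 : ℕ) : ℝ) ^ (1 / r)}, (X k ω) ^ 2 ∂P) := by
      simp only [ha_def]
      rw [ENNReal.ofReal_mul (Real.rpow_nonneg (by positivity) _),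
        ENNReal.ofReal_sum_of_nonneg (fun k _ => integral_nonneg fun ω => sq_nonneg _)]
    have hEn : ENNReal.ofReal (((n + 1 : ℕ) : ℝ) ^ β) * ((n + 1 : ℕ) : ℝ≥0∞) = E n := by
      rw [← ENNReal.ofReal_natCast,
        ← ENNReal.ofReal_mul (Real.rpow_nonneg (by positivity) _)]
      simp only [hE_def]
      congr 1
      rw [← htβ, Real.rpow_add_one (by positivity : (0:ℝ) < ((n + 1 : ℕ) : ℝ)).ne']
    rw [hsplit]
    refine le_trans (mul_le_mul_right hsum_k _) ?_
    rw [mul_add, hEn]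
    refine add_le_add le_rfl (le_of_eq ?_)
    rw [ENNReal.ofReal_mul hM.le, ENNReal.ofReal_natCast, ← hEn]
    ring
  -- Step III : ∑' E ≠ ⊤
  have step3 : ∑' n, E n ≠ ⊤ := by
    have hbd : ∀ n : ℕ, E n ≤ (if 0 < n then E n else 0) + (if n = 0 then 1 else 0) := by
      intro n
      rcases Nat.eq_zero_or_pos n with rfl | hn
      · simp [hE_def]
      · simp [hn, Nat.pos_iff_ne_zero.mp hn]
    have h1 := (ENNReal.tsum_le_tsum hbd).trans_eq (ENNReal.tsum_add)
    have h2 : ∑' n : ℕ, (if 0 < n then E n else 0)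
        ≤ ENNReal.ofReal (((0 + 1 : ℕ) : ℝ) ^ t / (-t)) := tail_tsum_le ht_neg 0
    have h3 : ∑' n : ℕ, (if n = 0 then (1:ℝ≥0∞) else 0) = 1 := tsum_ite_eq 0 1
    refine ne_top_of_le_ne_top ?_ (h1.trans (add_le_add h2 h3.le))
    exact ENNReal.add_ne_top.mpr ⟨ENNReal.ofReal_ne_top, ENNReal.one_ne_top⟩
  -- Step IV/V/VI : the double sum is finite
  have step4 : ∑' n : ℕ, (E n * ∑ j ∈ Finset.range n, G j) ≠ ⊤ := by
    have hswap : ∑' n : ℕ, (E n * ∑ j ∈ Finset.range n, G j)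
        = ∑' j : ℕ, (G j * ∑' n : ℕ, (if j < n then E n else 0)) := by
      have h1 : ∀ n : ℕ, E n * ∑ j ∈ Finset.range n, G j
          = ∑' j : ℕ, (if j < n then G j * E n else 0) := by
        intro n
        rw [tsum_eq_sum (s := Finset.range n)
          (fun j hj => if_neg (by simpa using hj)), Finset.mul_sum]
        refine Finset.sum_congr rfl fun j hj => ?_
        rw [if_pos (Finset.mem_range.mp hj), mul_comm]
      rw [tsum_congr h1, ENNReal.tsum_comm]
      refine tsum_congr fun j => ?_
      rw [← ENNReal.tsum_mul_left]
      refine tsum_congr fun n => ?_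
      split_ifs <;> simp
    -- Step V: per-j bound
    have hV : ∀ j : ℕ, G j * ENNReal.ofReal (((j + 1 : ℕ) : ℝ) ^ t / (-t))
        ≤ ENNReal.ofReal (u * 2 ^ (u - 1) / (-t)) *
          (ENNReal.ofReal (((j + 1 : ℕ) : ℝ) ^ (q - 1)) * Tail j) := by
      intro j
      have htp : (0:ℝ) < -t := by linarith
      have hx1 : (1:ℝ) ≤ ((j + 1 : ℕ) : ℝ) := by
        exact_mod_cast Nat.succ_le_succ (Nat.zero_le j)
      have hreal : d j * (((j + 1 : ℕ) : ℝ) ^ t / (-t))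
          ≤ (u * 2 ^ (u - 1) / (-t)) * ((j + 1 : ℕ) : ℝ) ^ (q - 1) := by
        have h1 : d j ≤ u * (((j + 1 : ℕ) : ℝ) + 1) ^ (u - 1) := by
          have h := rpow_succ_sub_le hu1 hx1
          have hc : ((j + 1 : ℕ) : ℝ) + 1 = ((j + 2 : ℕ) : ℝ) := by push_cast; ring
          rw [hc] at h
          calc d j = ((j + 2 : ℕ) : ℝ) ^ u - ((j + 1 : ℕ) : ℝ) ^ u := rfl
            _ ≤ u * ((j + 2 : ℕ) : ℝ) ^ (u - 1) := h
            _ = u * (((j + 1 : ℕ) : ℝ) + 1) ^ (u - 1) := by rw [hc]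
        have h2 : (((j + 1 : ℕ) : ℝ) + 1) ^ (u - 1)
            ≤ 2 ^ (u - 1) * ((j + 1 : ℕ) : ℝ) ^ (u - 1) := by
          rw [← Real.mul_rpow (by norm_num) (by positivity)]
          exact Real.rpow_le_rpow (by positivity) (by linarith) (by linarith)
        have h3 : ((j + 1 : ℕ) : ℝ) ^ (u - 1) * ((j + 1 : ℕ) : ℝ) ^ t
            = ((j + 1 : ℕ) : ℝ) ^ (q - 1) := by
          rw [← Real.rpow_add (by positivity), ← hqut]
        have hTnn : (0:ℝ) ≤ ((j + 1 : ℕ) : ℝ) ^ t := Real.rpow_nonneg (by positivity) _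
        have hu0 : (0:ℝ) ≤ u := by linarith
        have hmain : d j * ((j + 1 : ℕ) : ℝ) ^ t
            ≤ u * 2 ^ (u - 1) * ((j + 1 : ℕ) : ℝ) ^ (q - 1) := by
          calc d j * ((j + 1 : ℕ) : ℝ) ^ t
              ≤ (u * ((((j + 1 : ℕ) : ℝ) + 1) ^ (u - 1))) * ((j + 1 : ℕ) : ℝ) ^ t :=
                mul_le_mul_of_nonneg_right h1 hTnn
            _ ≤ (u * (2 ^ (u - 1) * ((j + 1 : ℕ) : ℝ) ^ (u - 1))) * ((j + 1 : ℕ) : ℝ) ^ t :=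
                mul_le_mul_of_nonneg_right (mul_le_mul_of_nonneg_left h2 hu0) hTnn
            _ = u * 2 ^ (u - 1) * (((j + 1 : ℕ) : ℝ) ^ (u - 1) * ((j + 1 : ℕ) : ℝ) ^ t) := by
                ring
            _ = _ := by rw [h3]
        rw [← mul_div_assoc, div_mul_eq_mul_div]
        gcongr
      calc G j * ENNReal.ofReal (((j + 1 : ℕ) : ℝ) ^ t / (-t))
          = ENNReal.ofReal (d j * (((j + 1 : ℕ) : ℝ) ^ t / (-t))) * Tail j := by
            rw [hG_def, ENNReal.ofReal_mul (hd_nonneg j)]; ring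
        _ ≤ ENNReal.ofReal ((u * 2 ^ (u - 1) / (-t)) * ((j + 1 : ℕ) : ℝ) ^ (q - 1)) * Tail j :=
            mul_le_mul_left (ENNReal.ofReal_le_ofReal hreal) _
        _ = _ := by
            rw [ENNReal.ofReal_mul (by positivity)]; ring
    -- Step VI : moment bound
    have hVI : ∑' j : ℕ, ENNReal.ofReal (((j + 1 : ℕ) : ℝ) ^ (q - 1)) * Tail j ≠ ⊤ := by
      have hZmeas : Measurable fun ω => |Y ω| ^ r :=
        (Real.continuous_rpow_const hr0.le).measurable.comp hY.abs
      have hsets : ∀ j : ℕ, {ω | ((j + 1 : ℕ) : ℝ) ^ (1 / r) < |Y ω|}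
          = {ω | ((j + 1 : ℕ) : ℝ) < |Y ω| ^ r} := by
        intro j
        ext ω
        simp only [Set.mem_setOf_eq]
        have hcr : (((j + 1 : ℕ) : ℝ) ^ (1 / r)) ^ r = ((j + 1 : ℕ) : ℝ) := by
          rw [← Real.rpow_mul (by positivity), one_div_mul_cancel hr0.ne', Real.rpow_one]
        constructor
        · intro h
          calc ((j + 1 : ℕ) : ℝ) = (((j + 1 : ℕ) : ℝ) ^ (1 / r)) ^ r := hcr.symm
            _ < |Y ω| ^ r := Real.rpow_lt_rpow (by positivity) h hr0
        · intro h
          by_contra hle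
          push_neg at hle
          have : |Y ω| ^ r ≤ ((j + 1 : ℕ) : ℝ) := by
            calc |Y ω| ^ r ≤ (((j + 1 : ℕ) : ℝ) ^ (1 / r)) ^ r :=
                Real.rpow_le_rpow (abs_nonneg _) hle hr0.le
              _ = _ := hcr
          linarith
      have hmm := moment_tsum_le P hZmeas (fun ω => Real.rpow_nonneg (abs_nonneg _) r) hq1
      have hpow : ∀ ω, (|Y ω| ^ r) ^ q = |Y ω| ^ p := by
        intro ω
        rw [← Real.rpow_mul (abs_nonneg _)]
        congr 1
        rw [hq_def]
        field_simp
      have hfin' : ∫⁻ ω, ENNReal.ofReal ((|Y ω| ^ r) ^ q) ∂P ≠ ⊤ := by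
        have h2 := hmom.hasFiniteIntegral
        rw [hasFiniteIntegral_iff_ofReal
          (ae_of_all _ fun ω => Real.rpow_nonneg (abs_nonneg _) p)] at h2
        refine ne_top_of_le_ne_top h2.ne ?_
        refine le_of_eq (lintegral_congr fun ω => ?_)
        rw [hpow]
      refine ne_top_of_le_ne_top hfin' ?_
      refine le_trans (le_of_eq (tsum_congr fun j => ?_)) hmm
      simp only [hTail_def]
      rw [hsets j]
    -- combine
    rw [hswap]
    have h4 : ∑' j : ℕ, (G j * ∑' n : ℕ, (if j < n then E n else 0))
        ≤ ∑' j : ℕ, ENNReal.ofReal (u * 2 ^ (u - 1) / (-t)) *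
          (ENNReal.ofReal (((j + 1 : ℕ) : ℝ) ^ (q - 1)) * Tail j) := by
      refine ENNReal.tsum_le_tsum fun j => ?_
      refine le_trans (mul_le_mul_right ?_ (G j)) (hV j)
      exact tail_tsum_le ht_neg j
    rw [ENNReal.tsum_mul_left] at h4
    exact ne_top_of_le_ne_top (ENNReal.mul_ne_top ENNReal.ofReal_ne_top hVI) h4
  -- Step I : conclude
  have key : ∑' n, ENNReal.ofReal (a n) ≠ ⊤ := by
    have hle : ∑' n, ENNReal.ofReal (a n)
        ≤ ∑' n, (E n + ENNReal.ofReal M * (E n * ∑ j ∈ Finset.range n, G j)) :=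
      ENNReal.tsum_le_tsum step2
    rw [ENNReal.tsum_add, ENNReal.tsum_mul_left] at hle
    exact ne_top_of_le_ne_top (by
      exact ENNReal.add_ne_top.mpr ⟨step3, ENNReal.mul_ne_top ENNReal.ofReal_ne_top step4⟩) hle
  exact (ENNReal.summable_toReal key).congr fun n => ENNReal.toReal_ofReal (ha_nonneg n)
end

section
/- Let 1 ≤ r < 2. For every positive integer k, 1 ≤ k^{r/2} · Γ(k/2) / ( 2^{r/2} · Γ((k+r)/2) ) ≤ (1 + r)^{1 - r/2}, where Γ is the real Gamma function. In particular (case r = 1), 1 ≤ k^{1/2} · Γ(k/2) / ( 2^{1/2} · Γ((k+1)/2) ) ≤ 2^{1/2} for every positive integer k. -/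
open MeasureTheory Filter Topology Real

lemma wendel_aux (s x : ℝ) (hs0 : 0 < s) (hs1 : s < 1) (hx : 1/2 ≤ x) :
    1 ≤ x ^ s * Real.Gamma x / Real.Gamma (x + s) ∧
    x ^ s * Real.Gamma x / Real.Gamma (x + s) ≤ (1 + 2*s) ^ (1 - s) := by
  have hxpos : 0 < x := by linarith
  have hGx : 0 < Real.Gamma x := Real.Gamma_pos_of_pos hxpos
  have hGxs : 0 < Real.Gamma (x + s) := Real.Gamma_pos_of_pos (by linarith)
  have hs1' : 0 < 1 - s := by linarith
  constructor
  · -- lower bound: Γ(x+s) ≤ x^s Γ(x)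
    have h := Real.Gamma_mul_add_mul_le_rpow_Gamma_mul_rpow_Gamma hxpos
      (show 0 < x + 1 by linarith) hs1' hs0 (by ring)
    have harg : (1 - s) * x + s * (x + 1) = x + s := by ring
    rw [harg, Real.Gamma_add_one hxpos.ne', Real.mul_rpow hxpos.le hGx.le] at h
    have heq : Real.Gamma x ^ (1 - s) * (x ^ s * Real.Gamma x ^ s)
        = x ^ s * Real.Gamma x := by
      rw [show Real.Gamma x ^ (1 - s) * (x ^ s * Real.Gamma x ^ s)
          = x ^ s * (Real.Gamma x ^ (1 - s) * Real.Gamma x ^ s) from by ring,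
        ← Real.rpow_add hGx]
      norm_num
    rw [heq] at h
    rw [le_div_iff₀ hGxs, one_mul]
    exact h
  · -- upper bound
    have h := Real.Gamma_mul_add_mul_le_rpow_Gamma_mul_rpow_Gamma
      (show 0 < x + s by linarith) (show 0 < x + s + 1 by linarith) hs0 hs1' (by ring)
    have harg : s * (x + s) + (1 - s) * (x + s + 1) = x + 1 := by ring
    rw [harg, Real.Gamma_add_one (show x + s ≠ 0 by positivity),
      Real.mul_rpow (by positivity) hGxs.le, Real.Gamma_add_one hxpos.ne'] at h
    -- h : x * Γ x ≤ Γ(x+s)^s * ((x+s)^(1-s) * Γ(x+s)^(1-s))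
    have key : x * Real.Gamma x ≤ (x + s) ^ (1 - s) * Real.Gamma (x + s) := by
      have heq : Real.Gamma (x+s) ^ s * ((x+s) ^ (1-s) * Real.Gamma (x+s) ^ (1-s))
          = (x+s) ^ (1-s) * Real.Gamma (x+s) := by
        rw [show Real.Gamma (x+s) ^ s * ((x+s) ^ (1-s) * Real.Gamma (x+s) ^ (1-s))
            = (x+s) ^ (1-s) * (Real.Gamma (x+s) ^ s * Real.Gamma (x+s) ^ (1-s)) from by ring,
          ← Real.rpow_add hGxs]
        norm_num
      rw [heq] at h
      exact h
    have step1 : x ^ s * Real.Gamma x / Real.Gamma (x + s) ≤ ((x + s) / x) ^ (1 - s) := by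
      rw [div_le_iff₀ hGxs]
      have hmul := mul_le_mul_of_nonneg_left key (Real.rpow_nonneg hxpos.le (s - 1))
      have e1 : x ^ (s - 1) * (x * Real.Gamma x) = x ^ s * Real.Gamma x := by
        rw [show x ^ (s-1) * (x * Real.Gamma x) = (x ^ (s-1) * x ^ (1:ℝ)) * Real.Gamma x from by
          rw [Real.rpow_one]; ring, ← Real.rpow_add hxpos]
        norm_num
      have e2 : x ^ (s - 1) * ((x + s) ^ (1 - s) * Real.Gamma (x + s))
          = ((x + s) / x) ^ (1 - s) * Real.Gamma (x + s) := by
        rw [Real.div_rpow (by positivity) hxpos.le, div_eq_mul_inv,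
          ← Real.rpow_neg hxpos.le, show -(1 - s) = s - 1 from by ring]
        ring
      rw [e1, e2] at hmul
      exact hmul
    refine step1.trans (Real.rpow_le_rpow (by positivity) ?_ hs1'.le)
    rw [div_le_iff₀ hxpos]
    nlinarith

lemma wendel_main (r : ℝ) (hr1 : 1 ≤ r) (hr2 : r < 2) (k : ℕ) (hk : 1 ≤ k) :
    1 ≤ (k : ℝ) ^ (r / 2) * Real.Gamma ((k : ℝ) / 2) /
          (2 ^ (r / 2) * Real.Gamma (((k : ℝ) + r) / 2)) ∧
    (k : ℝ) ^ (r / 2) * Real.Gamma ((k : ℝ) / 2) /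
          (2 ^ (r / 2) * Real.Gamma (((k : ℝ) + r) / 2)) ≤ (1 + r) ^ (1 - r / 2) := by
  have hk1 : (1 : ℝ) ≤ (k : ℝ) := by exact_mod_cast hk
  have hx : 1/2 ≤ (k : ℝ) / 2 := by linarith
  have hs0 : 0 < r / 2 := by linarith
  have hs1 : r / 2 < 1 := by linarith
  have h := wendel_aux (r/2) ((k:ℝ)/2) hs0 hs1 hx
  have e0 : ((k : ℝ) + r) / 2 = (k : ℝ) / 2 + r / 2 := by ring
  have e1 : (k : ℝ) ^ (r / 2) * Real.Gamma ((k : ℝ) / 2) /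
      (2 ^ (r / 2) * Real.Gamma (((k : ℝ) + r) / 2))
      = ((k : ℝ)/2) ^ (r/2) * Real.Gamma ((k : ℝ)/2) / Real.Gamma ((k:ℝ)/2 + r/2) := by
    have hG : Real.Gamma ((k:ℝ)/2 + r/2) ≠ 0 :=
      (Real.Gamma_pos_of_pos (by linarith : (0:ℝ) < (k:ℝ)/2 + r/2)).ne'
    have h2 : ((2:ℝ) ^ (r/2)) ≠ 0 := by positivity
    rw [e0, Real.div_rpow (Nat.cast_nonneg k) (by norm_num)]
    field_simp
  have e2 : (1 + 2 * (r/2)) ^ (1 - r/2) = (1 + r) ^ (1 - r/2) := by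
    rw [show (1:ℝ) + 2 * (r/2) = 1 + r from by ring]
  rw [e1]
  exact ⟨h.1, by rw [← e2]; exact h.2⟩

/-- **Gamma ratio bounds from Wendel's inequality.** For `1 ≤ r < 2` and every positive
integer `k`, `1 ≤ k^(r/2) Γ(k/2) / (2^(r/2) Γ((k+r)/2)) ≤ (1+r)^(1-r/2)`; in particular
(case `r = 1`), `1 ≤ k^(1/2) Γ(k/2) / (2^(1/2) Γ((k+1)/2)) ≤ 2^(1/2)`. -/
theorem stmt19 (r : ℝ) (hr1 : 1 ≤ r) (hr2 : r < 2) :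
    (∀ k : ℕ, 1 ≤ k →
      1 ≤ (k : ℝ) ^ (r / 2) * Real.Gamma ((k : ℝ) / 2) /
            (2 ^ (r / 2) * Real.Gamma (((k : ℝ) + r) / 2)) ∧
      (k : ℝ) ^ (r / 2) * Real.Gamma ((k : ℝ) / 2) /
            (2 ^ (r / 2) * Real.Gamma (((k : ℝ) + r) / 2)) ≤ (1 + r) ^ (1 - r / 2))
    ∧ ∀ k : ℕ, 1 ≤ k →
      1 ≤ (k : ℝ) ^ ((1 : ℝ) / 2) * Real.Gamma ((k : ℝ) / 2) /
            (2 ^ ((1 : ℝ) / 2) * Real.Gamma (((k : ℝ) + 1) / 2)) ∧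
      (k : ℝ) ^ ((1 : ℝ) / 2) * Real.Gamma ((k : ℝ) / 2) /
            (2 ^ ((1 : ℝ) / 2) * Real.Gamma (((k : ℝ) + 1) / 2)) ≤ 2 ^ ((1 : ℝ) / 2) := by
  constructor
  · exact fun k hk => wendel_main r hr1 hr2 k hk
  · intro k hk
    have h := wendel_main 1 le_rfl (by norm_num) k hk
    have : ((1:ℝ) + 1) ^ (1 - (1:ℝ)/2) = 2 ^ ((1:ℝ)/2) := by norm_num
    rw [this] at h
    exact h
end
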